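/- Let p, q be reals. Define the covectors on Fin 4: t̂_a = δ⁰_a, x̂_a = −δ¹_a, ŷ_a = −δ²_a, ẑ_a = −δ³_a, and the torsion tensor T_{abc} := −[ p · x̂_a ( x̂_c (t̂_b + ẑ_b) − x̂_b (t̂_c + ẑ_c) ) + q · ŷ_a ( ŷ_c (t̂_b + ẑ_b) − ŷ_b (t̂_c + ẑ_c) ) ], which is antisymmetric in its last two indices. Let ω̊^a{}_{bc} := ½( T_{bc}{}^a + T_{cb}{}^a − T^a{}_{bc} ) with indices raised and lowered by η, and lower the first index: ω̊_{abc} := η_{ad} ω̊^d{}_{bc}. Then the acceleration tensor φ_{ab} := ω̊_{b,0,a} vanishes identically: ω̊_{b,0,a} = 0 for all a, b (the fundamental frame of a +-polarized pp-wave spacetime is freely falling and nonrotating). -/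

import Mathlib

/-! Statement 6: The acceleration tensor `φ_{ab} = ω̊_{b(0)a}` of the fundamental
frame of a +-polarized pp-wave spacetime vanishes identically (the frame is
freely falling and nonrotating). -/

namespace Stmt6

noncomputable section

/-- Minkowski metric diag(1,-1,-1,-1) on `Fin 4` (it equals its own inverse). -/
def η : Fin 4 → Fin 4 → ℝ := fun a b => if a = b then (if a = 0 then 1 else -1) else 0

def that : Fin 4 → ℝ := ![1, 0, 0, 0]
def xhat : Fin 4 → ℝ := ![0, -1, 0, 0]
def yhat : Fin 4 → ℝ := ![0, 0, -1, 0]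
def zhat : Fin 4 → ℝ := ![0, 0, 0, -1]

/-- Torsion of the fundamental frame of a +-polarized pp wave (with `p = f′/f`,
`q = g′/g`), antisymmetric in its last two indices:
`T_{abc} = −[ p x̂_a ( x̂_c (t̂_b + ẑ_b) − x̂_b (t̂_c + ẑ_c) )
            + q ŷ_a ( ŷ_c (t̂_b + ẑ_b) − ŷ_b (t̂_c + ẑ_c) ) ]`. -/
def Tpp (p q : ℝ) : Fin 4 → Fin 4 → Fin 4 → ℝ := fun a b c =>
  -(p * xhat a * (xhat c * (that b + zhat b) - xhat b * (that c + zhat c))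
    + q * yhat a * (yhat c * (that b + zhat b) - yhat b * (that c + zhat c)))

/-- Levi-Civita spin connection `ω̊^a{}_{bc} := ½(T_{bc}{}^a + T_{cb}{}^a − T^a{}_{bc})`. -/
def spin (T : Fin 4 → Fin 4 → Fin 4 → ℝ) : Fin 4 → Fin 4 → Fin 4 → ℝ := fun a b c =>
  (1/2) * ((∑ d, η a d * T b c d) + (∑ d, η a d * T c b d) - (∑ d, η a d * T d b c))

/-- Spin connection with first index lowered: `ω̊_{abc} := η_{ad} ω̊^d{}_{bc}`. -/
def spinL (T : Fin 4 → Fin 4 → Fin 4 → ℝ) : Fin 4 → Fin 4 → Fin 4 → ℝ := fun a b c =>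
  ∑ d, η a d * spin T d b c

/-! Since `η` is its own inverse, lowering the first index of `ω̊` undoes the raising, so
`φ_{ab} = ½(T_{0ab} + T_{a0b} − T_{b0a})`. For the pp-wave torsion only `x̂, ŷ` occur in the
first slot, so `T_{0ab} = 0`, and `T_{a0b} = −(p x̂_a x̂_b + q ŷ_a ŷ_b)` is symmetric. -/

theorem η_contract_η (v : Fin 4 → ℝ) (a : Fin 4) :
    ∑ d, η a d * ∑ e, η d e * v e = v a := by
  fin_cases a <;> simp [η, Fin.sum_univ_four]

theorem spin_eq_half_contract (T : Fin 4 → Fin 4 → Fin 4 → ℝ) (a b c : Fin 4) :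
    spin T a b c = 1 / 2 * ∑ d, η a d * (T b c d + T c b d - T d b c) := by
  simp only [spin, mul_add, mul_sub, Finset.sum_add_distrib, Finset.sum_sub_distrib]

theorem spinL_eq (T : Fin 4 → Fin 4 → Fin 4 → ℝ) (a b c : Fin 4) :
    spinL T a b c = (T b c a + T c b a - T a b c) / 2 := by
  simp only [spinL, spin_eq_half_contract, mul_left_comm (η a _), ← Finset.mul_sum,
    η_contract_η]
  ring

theorem spinL_zero_mid_eq_zero (T : Fin 4 → Fin 4 → Fin 4 → ℝ)
    (h_time : ∀ b c, T 0 b c = 0) (h_symm : ∀ a b, T a 0 b = T b 0 a) (a b : Fin 4) :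
    spinL T b 0 a = 0 := by
  rw [spinL_eq, h_time, h_symm a b]
  ring

theorem Tpp_zero_left (p q : ℝ) (b c : Fin 4) : Tpp p q 0 b c = 0 := by
  simp [Tpp, xhat, yhat]

theorem Tpp_zero_mid (p q : ℝ) (a b : Fin 4) :
    Tpp p q a 0 b = -(p * xhat a * xhat b + q * yhat a * yhat b) := by
  simp [Tpp, that, xhat, yhat, zhat]

theorem pp_wave_fundamental_frame_freely_falling (p q : ℝ) :
    ∀ a b : Fin 4, spinL (Tpp p q) b 0 a = 0 :=
  spinL_zero_mid_eq_zero _ (Tpp_zero_left p q) fun a b => by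
    rw [Tpp_zero_mid, Tpp_zero_mid]
    ring

end

end Stmt6
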